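/- Let 0 → M → E → A → 0 be an abelian extension of a Rota-Baxter family BiHom-Ω-associative algebra (A, μ, R, p^A, q^A) of weight λ by a trivial Rota-Baxter family BiHom-Ω-associative algebra (M, 0, T, p^M, q^M), and let (s_α) be a section (p^E_α s_α = s_α p^A_α, q^E_α s_α = s_α q^A_α, ρ_α s_α = id_A). Define a ▷_{α,β} m := μ^E_{α,β}(s_α(a), i_β(m)) and m ◁_{α,β} a := μ^E_{α,β}(i_α(m), s_β(a)). Then (M, ▷_{α,β}, ◁_{α,β}, T_ω, p^M_ω, q^M_ω) is a Rota-Baxter family BiHom-Ω-bimodule over A. -/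
import Mathlib


/-- A bimodule over a BiHom-`Ω`-associative algebra. -/
def IsBiHomBimodule {k Ω A M : Type*} [CommRing k] [Monoid Ω]
    [AddCommGroup A] [Module k A] [AddCommGroup M] [Module k M]
    (mul : Ω → Ω → A →ₗ[k] A →ₗ[k] A) (p q : Ω → A →ₗ[k] A)
    (l : Ω → Ω → A →ₗ[k] M →ₗ[k] M) (r : Ω → Ω → M →ₗ[k] A →ₗ[k] M)
    (pM qM : Ω → M →ₗ[k] M) : Prop :=
  (∀ α β x m, pM (α * β) (l α β x m) = l α β (p α x) (pM β m)) ∧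
  (∀ α β x m, qM (α * β) (l α β x m) = l α β (q α x) (qM β m)) ∧
  (∀ α β γ x x' m,
    l α (β * γ) (p α x) (l β γ x' m) = l (α * β) γ (mul α β x x') (qM γ m)) ∧
  (∀ α β m x, pM (α * β) (r α β m x) = r α β (pM α m) (p β x)) ∧
  (∀ α β m x, qM (α * β) (r α β m x) = r α β (qM α m) (q β x)) ∧
  (∀ α β γ m x x',
    r α (β * γ) (pM α m) (mul β γ x x') = r (α * β) γ (r α β m x) (q γ x')) ∧
  (∀ α β γ x m x',
    l α (β * γ) (p α x) (r β γ m x') = r (α * β) γ (l α β x m) (q γ x'))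

/-- Given an abelian extension `0 → M → E → A → 0` of a
Rota-Baxter family BiHom-`Ω`-associative algebra `A` of weight `λ` by a trivial one
`M`, and a section `s`, the induced actions
`a ▷_{α,β} m = μ^E_{α,β}(s_α a, i_β m)` and `m ◁_{α,β} a = μ^E_{α,β}(i_α m, s_β a)`
make `(M, ▷, ◁, T, pM, qM)` a Rota-Baxter family BiHom-`Ω`-bimodule over `A`. -/
theorem abelianExtension_induces_RBFBimodule
    {k Ω A E M : Type*} [CommRing k] [Monoid Ω]
    [AddCommGroup A] [Module k A] [AddCommGroup E] [Module k E]
    [AddCommGroup M] [Module k M]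
    (lam : k)
    (mul : Ω → Ω → A →ₗ[k] A →ₗ[k] A) (R pA qA : Ω → A →ₗ[k] A)
    (mulE : Ω → Ω → E →ₗ[k] E →ₗ[k] E) (TE pE qE : Ω → E →ₗ[k] E)
    (T pM qM : Ω → M →ₗ[k] M)
    (i : Ω → M →ₗ[k] E) (ρ : Ω → E →ₗ[k] A) (s : Ω → A →ₗ[k] E)
    -- `A` is a Rota-Baxter family BiHom-`Ω`-associative algebra of weight `λ`
    (hApq : ∀ α β x, pA α (qA β x) = qA β (pA α x))
    (hApmul : ∀ α β x y, pA (α * β) (mul α β x y) = mul α β (pA α x) (pA β y))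
    (hAqmul : ∀ α β x y, qA (α * β) (mul α β x y) = mul α β (qA α x) (qA β y))
    (hAassoc : ∀ α β γ x y z,
      mul α (β * γ) (pA α x) (mul β γ y z) = mul (α * β) γ (mul α β x y) (qA γ z))
    (hApR : ∀ ω x, pA ω (R ω x) = R ω (pA ω x))
    (hAqR : ∀ ω x, qA ω (R ω x) = R ω (qA ω x))
    (hARB : ∀ α β x y,
      mul α β (R α x) (R β y)
        = R (α * β) (mul α β (R α x) y) + R (α * β) (mul α β x (R β y))
          + lam • R (α * β) (mul α β x y))
    -- `E` is a Rota-Baxter family BiHom-`Ω`-associative algebra of weight `λ`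
    (hEpq : ∀ α β x, pE α (qE β x) = qE β (pE α x))
    (hEpmul : ∀ α β x y, pE (α * β) (mulE α β x y) = mulE α β (pE α x) (pE β y))
    (hEqmul : ∀ α β x y, qE (α * β) (mulE α β x y) = mulE α β (qE α x) (qE β y))
    (hEassoc : ∀ α β γ x y z,
      mulE α (β * γ) (pE α x) (mulE β γ y z) = mulE (α * β) γ (mulE α β x y) (qE γ z))
    (hEpT : ∀ ω x, pE ω (TE ω x) = TE ω (pE ω x))
    (hEqT : ∀ ω x, qE ω (TE ω x) = TE ω (qE ω x))
    (hERB : ∀ α β x y,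
      mulE α β (TE α x) (TE β y)
        = TE (α * β) (mulE α β (TE α x) y) + TE (α * β) (mulE α β x (TE β y))
          + lam • TE (α * β) (mulE α β x y))
    -- `M` is a trivial Rota-Baxter family BiHom-`Ω`-associative algebra
    (hMpq : ∀ α β m, pM α (qM β m) = qM β (pM α m))
    (hMpT : ∀ ω m, pM ω (T ω m) = T ω (pM ω m))
    (hMqT : ∀ ω m, qM ω (T ω m) = T ω (qM ω m))
    -- short exactness
    (hinj : ∀ ω, Function.Injective (i ω))
    (hsurj : ∀ ω, Function.Surjective (ρ ω))
    (hexact : ∀ ω, LinearMap.range (i ω) = LinearMap.ker (ρ ω))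
    -- `i` and `ρ` are morphisms of Rota-Baxter family BiHom-`Ω`-associative algebras
    (hip : ∀ ω m, i ω (pM ω m) = pE ω (i ω m))
    (hiq : ∀ ω m, i ω (qM ω m) = qE ω (i ω m))
    (hiT : ∀ ω m, i ω (T ω m) = TE ω (i ω m))
    (himul : ∀ α β m m', mulE α β (i α m) (i β m') = 0)
    (hρp : ∀ ω x, ρ ω (pE ω x) = pA ω (ρ ω x))
    (hρq : ∀ ω x, ρ ω (qE ω x) = qA ω (ρ ω x))
    (hρT : ∀ ω x, ρ ω (TE ω x) = R ω (ρ ω x))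
    (hρmul : ∀ α β x y, ρ (α * β) (mulE α β x y) = mul α β (ρ α x) (ρ β y))
    -- `s` is a section
    (hsp : ∀ ω a, pE ω (s ω a) = s ω (pA ω a))
    (hsq : ∀ ω a, qE ω (s ω a) = s ω (qA ω a))
    (hρs : ∀ ω a, ρ ω (s ω a) = a)
    -- the induced actions, characterized through the injection `i`
    (l : Ω → Ω → A →ₗ[k] M →ₗ[k] M) (r : Ω → Ω → M →ₗ[k] A →ₗ[k] M)
    (hl : ∀ α β a m, i (α * β) (l α β a m) = mulE α β (s α a) (i β m))
    (hr : ∀ α β m a, i (α * β) (r α β m a) = mulE α β (i α m) (s β a)) :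
    IsBiHomBimodule mul pA qA l r pM qM ∧
    (∀ ω m, pM ω (T ω m) = T ω (pM ω m)) ∧
    (∀ ω m, qM ω (T ω m) = T ω (qM ω m)) ∧
    (∀ α β a m,
      l α β (R α a) (T β m)
        = T (α * β) (l α β a (T β m) + l α β (R α a) m + lam • l α β a m)) ∧
    (∀ α β m a,
      r α β (T α m) (R β a)
        = T (α * β) (r α β m (R β a) + r α β (T α m) a + lam • r α β m a)) := by

  -- elements in the kernel of ρ lie in the range of i
  have hker : ∀ ω (x : E), ρ ω x = 0 → ∃ m, i ω m = x := by
    intro ω x hx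
    have : x ∈ LinearMap.ker (ρ ω) := hx
    rw [← hexact] at this
    exact this
  -- multiplying a kernel element with an image element gives 0
  have hkillL : ∀ α β (x : E) (m : M), ρ α x = 0 → mulE α β x (i β m) = 0 := by
    intro α β x m hx
    obtain ⟨m0, hm0⟩ := hker α x hx
    rw [← hm0, himul]
  have hkillR : ∀ α β (m : M) (x : E), ρ β x = 0 → mulE α β (i α m) x = 0 := by
    intro α β m x hx
    obtain ⟨m0, hm0⟩ := hker β x hx
    rw [← hm0, himul]
  refine ⟨⟨?_, ?_, ?_, ?_, ?_, ?_, ?_⟩, hMpT, hMqT, ?_, ?_⟩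
  · intro α β x m
    apply hinj (α * β)
    rw [hip, hl, hl, hEpmul, hsp, hip]
  · intro α β x m
    apply hinj (α * β)
    rw [hiq, hl, hl, hEqmul, hsq, hiq]
  · intro α β γ x x' m
    apply hinj (α * (β * γ))
    rw [hl, hl, ← hsp, hEassoc, ← hiq, ← mul_assoc, hl]
    have hd : ρ (α * β) (mulE α β (s α x) (s β x') - s (α * β) (mul α β x x')) = 0 := by
      simp [hρmul, hρs]
    have h0 := hkillL (α * β) γ _ (qM γ m) hd
    rw [map_sub, LinearMap.sub_apply, sub_eq_zero] at h0
    exact h0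
  · intro α β m x
    apply hinj (α * β)
    rw [hip, hr, hr, hEpmul, hsp, hip]
  · intro α β m x
    apply hinj (α * β)
    rw [hiq, hr, hr, hEqmul, hsq, hiq]
  · intro α β γ m x x'
    apply hinj (α * (β * γ))
    have hd : ρ (β * γ) (mulE β γ (s β x) (s γ x') - s (β * γ) (mul β γ x x')) = 0 := by
      simp [hρmul, hρs]
    have h0 := hkillR α (β * γ) (pM α m) _ hd
    rw [map_sub, sub_eq_zero] at h0
    rw [hr, ← mul_assoc, hr, hr, ← hsq, ← h0, hip, hEassoc]
  · intro α β γ x m x'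
    apply hinj (α * (β * γ))
    rw [hl, hr, ← mul_assoc, hr, hl, ← hsp, ← hsq, hEassoc]
  · intro α β a m
    apply hinj (α * β)
    simp only [hiT, map_add, map_smul, hl]
    have hd : ρ α (s α (R α a) - TE α (s α a)) = 0 := by simp [hρT, hρs]
    have h1 := hkillL α β _ (T β m) hd
    rw [map_sub, LinearMap.sub_apply, hiT, sub_eq_zero] at h1
    have h2 := hkillL α β _ m hd
    rw [map_sub, LinearMap.sub_apply, sub_eq_zero] at h2
    rw [h1, hERB, h2]
    abel
  · intro α β m a
    apply hinj (α * β)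
    simp only [hiT, map_add, map_smul, hr]
    have hd : ρ β (s β (R β a) - TE β (s β a)) = 0 := by simp [hρT, hρs]
    have h1 := hkillR α β (T α m) _ hd
    rw [map_sub, hiT, sub_eq_zero] at h1
    have h2 := hkillR α β m _ hd
    rw [map_sub, sub_eq_zero] at h2
    rw [h1, hERB, h2]
    abel
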